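/- Every complete Reinhardt closed set K ⊆ ℂⁿ supports the SC-inequality: for every cylinder C = {z ∈ ℂⁿ : |z₁| ≤ R} with ν_n(K) = ν_n(C), and every t ≥ 1, one has ν_n(tK) ≥ ν_n(tC). -/

import Mathlib

open MeasureTheory Real Set
open scoped Pointwise

/-- The standard Gaussian measure `ν_n` on `ℂⁿ`, with density
`(2π)⁻ⁿ exp(-|z|²/2)` with respect to Lebesgue measure. -/
noncomputable def nuC (n : ℕ) : MeasureTheory.Measure (Fin n → ℂ) :=
  MeasureTheory.volume.withDensity fun z =>
    ENNReal.ofReal (((2 * Real.pi) ^ n)⁻¹ * Real.exp (-(∑ k, ‖z k‖ ^ 2) / 2))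

/-- The cylinder `{z ∈ ℂⁿ : |z₁| ≤ R}`. -/
def cylC {n : ℕ} (hn : 0 < n) (R : ℝ) : Set (Fin n → ℂ) :=
  {z | ‖z ⟨0, hn⟩‖ ≤ R}

/-- `K ⊆ ℂⁿ` supports the SC-inequality: for every cylinder `C` (with `R ≥ 0`) of
the same Gaussian measure and every `t ≥ 1`, one has `ν_n(tK) ≥ ν_n(tC)`. -/
def SupportsSC {n : ℕ} (hn : 0 < n) (K : Set (Fin n → ℂ)) : Prop :=
  ∀ R : ℝ, 0 ≤ R → nuC n K = nuC n (cylC hn R) →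
    ∀ t : ℝ, 1 ≤ t → nuC n (t • cylC hn R) ≤ nuC n (t • K)

/-!
Write `B = Kᶜ`; it is increasing in each modulus `|z_k|`. We show `ν_n(tB) ≤ ν_n(B)^{t²}` by
induction on `n`, slicing along the first coordinate: the measure of the slice of `B` over `z₁`
is a monotone function `g(|z₁|²/2)` with values in `[0, 1]`, the slices of `tB` are dilates of
slices of `B`, and in the variable `u = |z₁|²/2` the complex Gaussian becomes `e^{-u} du`. The
step is then the one-dimensional inequality
`∫₀^∞ e^{-u} g(u/s)^s du ≤ (∫₀^∞ e^{-u} g(u) du)^s` for `s = t² ≥ 1`.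
Substituting `u = s v` and writing `f(v) = e^{-v} g(v)`, `W(v) = ∫_v^∞ f`, monotonicity of `g`
gives `f ≤ W`, hence `s ∫ f^s ≤ ∫ s W^{s-1} f = W(0)^s - W(∞)^s ≤ (∫ f)^s`.
Cylinder complements are extremal: `ν_n(|z₁| > R) = e^{-R²/2}`, so
`ν_n(tC) = 1 - ν_n(Cᶜ)^{t²} = 1 - ν_n(Kᶜ)^{t²} ≤ 1 - ν_n(tKᶜ) = ν_n(tK)`.
-/

open scoped ENNReal

lemma rpow_le_rpow_sub_one_mul {x y s : ℝ} (hx : 0 ≤ x) (hxy : x ≤ y) (hs : 1 ≤ s) :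
    x ^ s ≤ y ^ (s - 1) * x :=
  calc x ^ s = x ^ (s - 1) * x := by rw [← Real.rpow_add_one' hx (by linarith), sub_add_cancel]
    _ ≤ y ^ (s - 1) * x :=
        mul_le_mul_of_nonneg_right (Real.rpow_le_rpow hx hxy (by linarith)) hx

section ExpTail

variable {g : ℝ → ℝ}

noncomputable def expTail (g : ℝ → ℝ) (v : ℝ) : ℝ := ∫ u in Ioi v, exp (-u) * g u

lemma integrableOn_exp_neg_mul_Ioi (hgm : AEStronglyMeasurable g) (hg : ∀ x, ‖g x‖ ≤ 1)
    (a : ℝ) : IntegrableOn (fun u => exp (-u) * g u) (Ioi a) :=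
  (integrableOn_exp_neg_Ioi a).mul_bdd hgm.restrict (.of_forall hg)

lemma intervalIntegrable_exp_neg_mul (hgm : AEStronglyMeasurable g) (hg : ∀ x, ‖g x‖ ≤ 1)
    (a b : ℝ) : IntervalIntegrable (fun u => exp (-u) * g u) volume a b :=
  intervalIntegrable_iff.2 <|
    (integrableOn_exp_neg_mul_Ioi hgm hg (min a b)).mono_set Ioc_subset_Ioi_self

lemma expTail_eq_sub (hgm : AEStronglyMeasurable g) (hg : ∀ x, ‖g x‖ ≤ 1) (v : ℝ) :
    expTail g v = expTail g 0 - ∫ u in (0 : ℝ)..v, exp (-u) * g u := by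
  rw [expTail, expTail, ← intervalIntegral.integral_Ioi_sub_Ioi'
    (integrableOn_exp_neg_mul_Ioi hgm hg 0) (integrableOn_exp_neg_mul_Ioi hgm hg v),
    sub_sub_cancel]

lemma continuous_expTail (hgm : AEStronglyMeasurable g) (hg : ∀ x, ‖g x‖ ≤ 1) :
    Continuous (expTail g) := by
  rw [funext (expTail_eq_sub hgm hg)]
  exact continuous_const.sub <| intervalIntegral.continuous_primitive
    (intervalIntegrable_exp_neg_mul hgm hg) 0

lemma hasDerivAt_expTail (hgm : Measurable g) (hg : ∀ x, ‖g x‖ ≤ 1) {x : ℝ}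
    (hx : ContinuousAt g x) : HasDerivAt (expTail g) (-(exp (-x) * g x)) x := by
  rw [funext (expTail_eq_sub hgm.aestronglyMeasurable hg)]
  refine (intervalIntegral.integral_hasDerivAt_right ?_ ?_ ?_).const_sub _
  · exact intervalIntegrable_exp_neg_mul hgm.aestronglyMeasurable hg 0 x
  · exact ((measurable_exp.comp measurable_neg).mul hgm).stronglyMeasurable
      |>.stronglyMeasurableAtFilter
  · exact (continuous_exp.comp continuous_neg).continuousAt.mul hx

lemma exp_neg_mul_le_expTail (hg : Monotone g) (hg1 : ∀ x, ‖g x‖ ≤ 1) (v : ℝ) :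
    exp (-v) * g v ≤ expTail g v :=
  calc exp (-v) * g v = ∫ u in Ioi v, exp (-u) * g v := by
        rw [integral_mul_const, integral_exp_neg_Ioi]
    _ ≤ expTail g v :=
        setIntegral_mono_on ((integrableOn_exp_neg_Ioi v).mul_const (g v))
          (integrableOn_exp_neg_mul_Ioi hg.measurable.aestronglyMeasurable hg1 v)
          measurableSet_Ioi fun u hu =>
            mul_le_mul_of_nonneg_left (hg (le_of_lt hu)) (exp_nonneg _)

lemma intervalIntegrable_mul_expTail_rpow_mul (hgm : Measurable g) (hg : ∀ x, ‖g x‖ ≤ 1)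
    {s : ℝ} (hs : 1 ≤ s) (a b : ℝ) :
    IntervalIntegrable (fun v => s * expTail g v ^ (s - 1) * (exp (-v) * g v)) volume a b :=
  (intervalIntegrable_exp_neg_mul hgm.aestronglyMeasurable hg a b).continuousOn_mul <|
    (continuous_const.mul <| (continuous_expTail hgm.aestronglyMeasurable hg).rpow_const
      fun _ => Or.inr (by linarith)).continuousOn

theorem integral_mul_expTail_rpow_mul (hg : Monotone g) (hg1 : ∀ x, ‖g x‖ ≤ 1) {s : ℝ}
    (hs : 1 ≤ s) {a b : ℝ} (hab : a ≤ b) :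
    ∫ v in a..b, s * expTail g v ^ (s - 1) * (exp (-v) * g v)
      = expTail g a ^ s - expTail g b ^ s := by
  have hFTC := integral_eq_of_hasDerivAt_off_countable_of_le (fun v => expTail g v ^ s)
    (fun v => -(s * expTail g v ^ (s - 1) * (exp (-v) * g v))) hab
    hg.countable_not_continuousAt
    ((continuous_expTail hg.measurable.aestronglyMeasurable hg1).rpow_const
      fun _ => Or.inr (by linarith)).continuousOn
    (fun x hx => ((hasDerivAt_expTail hg.measurable hg1 (not_not.1 hx.2)).rpow_const
      (Or.inr hs)).congr_deriv (by ring))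
    (intervalIntegrable_mul_expTail_rpow_mul hg.measurable hg1 hs a b).neg
  rw [intervalIntegral.integral_neg] at hFTC
  linarith

theorem mul_integral_exp_neg_mul_rpow_le (hg : Monotone g) (hg0 : ∀ x, 0 ≤ g x)
    (hg1 : ∀ x, g x ≤ 1) {s : ℝ} (hs : 1 ≤ s) :
    s * ∫ v in Ioi 0, (exp (-v) * g v) ^ s ≤ (∫ v in Ioi 0, exp (-v) * g v) ^ s := by
  have hgn : ∀ x, ‖g x‖ ≤ 1 := fun x => by rw [Real.norm_of_nonneg (hg0 x)]; exact hg1 x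
  have hf0 : ∀ v, 0 ≤ exp (-v) * g v := fun v => mul_nonneg (exp_nonneg _) (hg0 v)
  have hint : IntegrableOn (fun v => s * (exp (-v) * g v) ^ s) (Ioi 0) := by
    refine ((integrableOn_exp_neg_mul_Ioi hg.measurable.aestronglyMeasurable hgn 0).const_mul
      s).mono' ((((measurable_exp.comp measurable_neg).mul hg.measurable).pow_const s).const_mul
        s).aestronglyMeasurable ((ae_restrict_iff' measurableSet_Ioi).2 (.of_forall fun v hv => ?_))
    have hf1 : exp (-v) * g v ≤ 1 :=
      mul_le_one₀ (exp_le_one_iff.2 (by simpa using le_of_lt hv)) (hg0 v) (hg1 v)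
    rw [Real.norm_of_nonneg (by have := hf0 v; positivity)]
    gcongr
    exact Real.rpow_le_self_of_le_one (hf0 v) hf1 hs
  have hbound : ∀ A, 0 ≤ A → ∫ v in (0 : ℝ)..A, s * (exp (-v) * g v) ^ s ≤ expTail g 0 ^ s :=
    fun A hA => calc
      ∫ v in (0 : ℝ)..A, s * (exp (-v) * g v) ^ s
          ≤ ∫ v in (0 : ℝ)..A, s * expTail g v ^ (s - 1) * (exp (-v) * g v) := by
        refine intervalIntegral.integral_mono_on hA ((intervalIntegrable_iff_integrableOn_Ioc_of_le
          hA).2 (hint.mono_set Ioc_subset_Ioi_self))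
          (intervalIntegrable_mul_expTail_rpow_mul hg.measurable hgn hs 0 A) fun v _ => ?_
        rw [mul_assoc]
        exact mul_le_mul_of_nonneg_left (rpow_le_rpow_sub_one_mul (hf0 v)
          (exp_neg_mul_le_expTail hg hgn v) hs) (by linarith)
      _ ≤ expTail g 0 ^ s := by
        rw [integral_mul_expTail_rpow_mul hg hgn hs hA]
        have := Real.rpow_nonneg ((hf0 A).trans (exp_neg_mul_le_expTail hg hgn A)) s
        linarith
  rw [← integral_const_mul]
  exact le_of_tendsto (intervalIntegral_tendsto_integral_Ioi 0 hint Filter.tendsto_id)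
    (Filter.eventually_atTop.2 ⟨0, hbound⟩)

theorem integral_exp_neg_mul_rpow_div_le (hg : Monotone g) (hg0 : ∀ x, 0 ≤ g x)
    (hg1 : ∀ x, g x ≤ 1) {s : ℝ} (hs : 1 ≤ s) :
    ∫ u in Ioi 0, exp (-u) * g (u / s) ^ s ≤ (∫ u in Ioi 0, exp (-u) * g u) ^ s := by
  have hs0 : 0 < s := by linarith
  calc ∫ u in Ioi 0, exp (-u) * g (u / s) ^ s
      = ∫ u in Ioi 0, (exp (-(s⁻¹ * u)) * g (s⁻¹ * u)) ^ s := by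
        refine setIntegral_congr_fun measurableSet_Ioi fun u _ => ?_
        rw [Real.mul_rpow (exp_nonneg _) (hg0 _), ← Real.exp_mul, inv_mul_eq_div]
        field_simp
    _ = s * ∫ v in Ioi 0, (exp (-v) * g v) ^ s := by
        rw [integral_comp_mul_left_Ioi (fun v => (exp (-v) * g v) ^ s) 0 (inv_pos.2 hs0),
          mul_zero, inv_inv, smul_eq_mul]
    _ ≤ _ := mul_integral_exp_neg_mul_rpow_le hg hg0 hg1 hs

end ExpTail

theorem lintegral_exp_neg_mul_rpow_div_le {g : ℝ → ℝ≥0∞} (hg : Monotone g) (hg1 : ∀ x, g x ≤ 1)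
    {s : ℝ} (hs : 1 ≤ s) :
    ∫⁻ u in Ioi 0, ENNReal.ofReal (exp (-u)) * g (u / s) ^ s
      ≤ (∫⁻ u in Ioi 0, ENNReal.ofReal (exp (-u)) * g u) ^ s := by
  have hg_ne_top : ∀ x, g x ≠ ⊤ := fun x => ne_top_of_le_ne_top ENNReal.one_ne_top (hg1 x)
  set φ : ℝ → ℝ := fun x => (g x).toReal
  have hφ : Monotone φ := fun a b h => ENNReal.toReal_mono (hg_ne_top b) (hg h)
  have hφ0 : ∀ x, 0 ≤ φ x := fun x => ENNReal.toReal_nonneg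
  have hφ1 : ∀ x, φ x ≤ 1 := fun x =>
    ENNReal.toReal_le_of_le_ofReal zero_le_one (by simpa using hg1 x)
  have hg_eq : ∀ x, g x = ENNReal.ofReal (φ x) := fun x =>
    (ENNReal.ofReal_toReal (hg_ne_top x)).symm
  have hlint : ∀ ψ : ℝ → ℝ, Measurable ψ → (∀ x, 0 ≤ ψ x) → (∀ x, ψ x ≤ 1) →
      ∫⁻ u in Ioi 0, ENNReal.ofReal (exp (-u)) * ENNReal.ofReal (ψ u)
        = ENNReal.ofReal (∫ u in Ioi 0, exp (-u) * ψ u) := fun ψ hψm hψ0 hψ1 => by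
    rw [ofReal_integral_eq_lintegral_ofReal (integrableOn_exp_neg_mul_Ioi hψm.aestronglyMeasurable
      (fun x => by rw [Real.norm_of_nonneg (hψ0 x)]; exact hψ1 x) 0)
      (.of_forall fun u => mul_nonneg (exp_nonneg _) (hψ0 u))]
    simp_rw [ENNReal.ofReal_mul (exp_nonneg _)]
  have hs0 : 0 ≤ s := by linarith
  simp only [hg_eq, ENNReal.ofReal_rpow_of_nonneg (hφ0 _) hs0]
  rw [hlint (fun u => φ (u / s) ^ s) ((hφ.measurable.comp (measurable_id.div_const s)).pow_const s)
      (fun x => Real.rpow_nonneg (hφ0 _) s) (fun x => Real.rpow_le_one (hφ0 _) (hφ1 _) hs0),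
    hlint φ hφ.measurable hφ0 hφ1, ENNReal.ofReal_rpow_of_nonneg (setIntegral_nonneg
      measurableSet_Ioi fun u _ => mul_nonneg (exp_nonneg _) (hφ0 u)) hs0]
  exact ENNReal.ofReal_le_ofReal (integral_exp_neg_mul_rpow_div_le hφ hφ0 hφ1 hs)

lemma lintegral_exp_neg_Ioi (a : ℝ) :
    ∫⁻ u in Ioi a, ENNReal.ofReal (exp (-u)) = ENNReal.ofReal (exp (-a)) := by
  rw [← ofReal_integral_eq_lintegral_ofReal (integrableOn_exp_neg_Ioi a)
    (.of_forall fun _ => exp_nonneg _), integral_exp_neg_Ioi]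

lemma image_sq_div_two_Ioi : (fun r : ℝ => r ^ 2 / 2) '' Ioi 0 = Ioi 0 := by
  ext u
  constructor
  · rintro ⟨r, hr, rfl⟩
    simp only [mem_Ioi] at hr ⊢
    positivity
  · intro hu
    refine ⟨√(2 * u), Real.sqrt_pos.2 (by simpa using hu), ?_⟩
    show √(2 * u) ^ 2 / 2 = u
    rw [Real.sq_sqrt (by linarith [mem_Ioi.1 hu])]
    ring

lemma lintegral_Ioi_mul_comp_sq_div_two (G : ℝ → ℝ≥0∞) :
    ∫⁻ r in Ioi 0, ENNReal.ofReal r * G (r ^ 2 / 2) = ∫⁻ u in Ioi 0, G u := by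
  have hinj : InjOn (fun r : ℝ => r ^ 2 / 2) (Ioi 0) := fun a ha b hb hab => by
    simp only at hab
    nlinarith [mem_Ioi.1 ha, mem_Ioi.1 hb]
  conv_rhs => rw [← image_sq_div_two_Ioi]
  rw [lintegral_image_eq_lintegral_abs_deriv_mul measurableSet_Ioi
    (fun r _ => ((hasDerivAt_pow 2 r).div_const (2 : ℝ)).hasDerivWithinAt) hinj]
  refine setLIntegral_congr_fun measurableSet_Ioi fun r (hr : 0 < r) => ?_
  norm_num [abs_of_pos hr]

noncomputable def gaussianC : Measure ℂ :=
  volume.withDensity fun z => ENNReal.ofReal ((2 * π)⁻¹ * exp (-‖z‖ ^ 2 / 2))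

theorem lintegral_gaussianC_comp_sq_norm_div_two {h : ℝ → ℝ≥0∞} (hh : Measurable h) :
    ∫⁻ z, h (‖z‖ ^ 2 / 2) ∂gaussianC = ∫⁻ u in Ioi 0, ENNReal.ofReal (exp (-u)) * h u := by
  have hangle : ∫⁻ _ in Ioo (-π) π, ENNReal.ofReal (2 * π)⁻¹ = 1 := by
    rw [setLIntegral_const, Real.volume_Ioo, ← ENNReal.ofReal_mul (by positivity)]
    rw [show (2 * π)⁻¹ * (π - -π) = 1 by field_simp; ring, ENNReal.ofReal_one]
  rw [gaussianC, lintegral_withDensity_eq_lintegral_mul _ (by fun_prop) (by fun_prop),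
    ← Complex.lintegral_comp_polarCoord_symm, polarCoord_target,
    setLIntegral_congr_fun (measurableSet_Ioi.prod measurableSet_Ioo)
      (g := fun p => ENNReal.ofReal p.1 * (ENNReal.ofReal (exp (-(p.1 ^ 2 / 2))) * h (p.1 ^ 2 / 2))
        * ENNReal.ofReal (2 * π)⁻¹) fun p (hp : 0 < p.1 ∧ _) => ?_,
    Measure.volume_eq_prod, ← Measure.prod_restrict,
    lintegral_prod_mul (g := fun _ => ENNReal.ofReal (2 * π)⁻¹)
      (f := fun r => ENNReal.ofReal r * (ENNReal.ofReal (exp (-(r ^ 2 / 2))) * h (r ^ 2 / 2)))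
      (by fun_prop) (by fun_prop),
    hangle, mul_one]
  · exact lintegral_Ioi_mul_comp_sq_div_two fun u => ENNReal.ofReal (exp (-u)) * h u
  · simp only [Pi.mul_apply, Complex.norm_polarCoord_symm, abs_of_pos hp.1, smul_eq_mul,
      ENNReal.ofReal_mul (inv_nonneg.2 (by positivity : (0 : ℝ) ≤ 2 * π)), neg_div]
    ring

instance : IsProbabilityMeasure gaussianC :=
  ⟨by simpa [lintegral_exp_neg_Ioi] using
    lintegral_gaussianC_comp_sq_norm_div_two (h := fun _ => 1) measurable_const⟩

lemma gaussianC_lt_norm {R : ℝ} (hR : 0 ≤ R) :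
    gaussianC {z | R < ‖z‖} = ENNReal.ofReal (exp (-R ^ 2 / 2)) := by
  have hset : {z : ℂ | R < ‖z‖} = (fun z => ‖z‖ ^ 2 / 2) ⁻¹' Ioi (R ^ 2 / 2) := by
    ext z
    simp only [mem_ofPred_eq, mem_preimage, mem_Ioi]
    rw [div_lt_div_iff_of_pos_right two_pos, pow_lt_pow_iff_left₀ hR (norm_nonneg z) two_ne_zero]
  rw [hset, ← lintegral_indicator_one (measurableSet_Ioi.preimage (by fun_prop))]
  change ∫⁻ z, (Ioi (R ^ 2 / 2)).indicator 1 (‖z‖ ^ 2 / 2) ∂gaussianC = _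
  rw [lintegral_gaussianC_comp_sq_norm_div_two (measurable_one.indicator measurableSet_Ioi)]
  simp_rw [← Set.indicator_mul_right _ (fun u => ENNReal.ofReal (exp (-u))), Pi.one_apply, mul_one]
  rw [setLIntegral_indicator measurableSet_Ioi, Ioi_inter_Ioi,
    max_eq_left (by positivity : (0 : ℝ) ≤ R ^ 2 / 2), lintegral_exp_neg_Ioi, neg_div]

lemma smul_set_compl₀ {G₀ β : Type*} [GroupWithZero G₀] [MulAction G₀ β] {a : G₀} (ha : a ≠ 0)
    (s : Set β) : a • sᶜ = (a • s)ᶜ := by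
  ext x
  simp [mem_smul_set_iff_inv_smul_mem₀ ha]

def slice {α : Type*} {n : ℕ} (S : Set (Fin (n + 1) → α)) (z : α) : Set (Fin n → α) :=
  {w | Fin.cons z w ∈ S}

lemma measurableSet_slice {α : Type*} [MeasurableSpace α] {n : ℕ} {S : Set (Fin (n + 1) → α)}
    (hS : MeasurableSet S) (z : α) :
    MeasurableSet (slice S z) :=
  hS.preimage <| measurable_pi_iff.2 fun k => by
    cases k using Fin.cases <;> simp [measurable_pi_apply]

lemma slice_smul {G₀ α : Type*} [GroupWithZero G₀] [MulAction G₀ α] {n : ℕ}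
    {S : Set (Fin (n + 1) → α)} {t : G₀} (ht : t ≠ 0) (z : α) :
    slice (t • S) z = t • slice S (t⁻¹ • z) := by
  ext w
  simp only [slice, mem_ofPred_eq, mem_smul_set_iff_inv_smul_mem₀ ht]
  rw [show t⁻¹ • (Fin.cons z w : Fin (n + 1) → α) = Fin.cons (t⁻¹ • z) (t⁻¹ • w) from
    Matrix.smul_cons _ _ _]

instance (n : ℕ) : SFinite (nuC n) := by
  unfold nuC; infer_instance

theorem map_piFinSuccAbove_nuC (n : ℕ) :
    (nuC (n + 1)).map (MeasurableEquiv.piFinSuccAbove (fun _ => ℂ) 0)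
      = gaussianC.prod (nuC n) := by
  set e := MeasurableEquiv.piFinSuccAbove (fun _ : Fin (n + 1) => ℂ) 0
  ext S hS
  rw [e.map_apply, nuC, withDensity_apply _ (e.measurable hS), gaussianC, nuC,
    prod_withDensity (by fun_prop) (by fun_prop), withDensity_apply _ hS, ← Measure.volume_eq_prod,
    ← (volume_preserving_piFinSuccAbove (fun _ => ℂ) 0).setLIntegral_comp_preimage_emb
      e.measurableEmbedding]
  refine setLIntegral_congr_fun (e.measurable hS) fun x _ => ?_
  simp only [MeasurableEquiv.piFinSuccAbove_apply, Fin.insertNthEquiv_zero,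
    Fin.consEquiv_symm_apply, Fin.sum_univ_succ, Fin.tail]
  rw [← ENNReal.ofReal_mul (by positivity), neg_add, add_div, Real.exp_add, pow_succ]
  congr 1
  ring

theorem nuC_succ_apply {n : ℕ} {S : Set (Fin (n + 1) → ℂ)} (hS : MeasurableSet S) :
    nuC (n + 1) S = ∫⁻ z, nuC n (slice S z) ∂gaussianC := by
  set e := MeasurableEquiv.piFinSuccAbove (fun _ : Fin (n + 1) => ℂ) 0
  calc nuC (n + 1) S = (nuC (n + 1)).map e (e.symm ⁻¹' S) := by
        rw [e.map_apply, ← preimage_comp, e.symm_comp_self, preimage_id]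
    _ = _ := by
        rw [map_piFinSuccAbove_nuC, Measure.prod_apply (e.symm.measurable hS)]
        congr! with z
        ext w
        simp only [e, MeasurableEquiv.piFinSuccAbove_symm_apply, Fin.insertNthEquiv_zero,
          mem_preimage, slice, mem_ofPred_eq]
        rfl

instance (n : ℕ) : IsProbabilityMeasure (nuC n) := by
  induction n with
  | zero => exact ⟨by simp [nuC, volume_pi]⟩
  | succ n ih => exact ⟨by simp [nuC_succ_apply MeasurableSet.univ, slice]⟩

theorem map_eval_zero_nuC (n : ℕ) : (nuC (n + 1)).map (fun z => z 0) = gaussianC := by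
  have : (fun z : Fin (n + 1) → ℂ => z 0)
      = Prod.fst ∘ MeasurableEquiv.piFinSuccAbove (fun _ => ℂ) 0 := rfl
  rw [this, ← Measure.map_map measurable_fst (MeasurableEquiv.measurable _), map_piFinSuccAbove_nuC,
    Measure.map_fst_prod, measure_univ, one_smul]

def IsCompleteReinhardt {ι : Type*} (K : Set (ι → ℂ)) : Prop :=
  ∀ z ∈ K, ∀ w : ι → ℂ, (∀ k, ‖w k‖ ≤ ‖z k‖) → w ∈ K

namespace IsCompleteReinhardt

variable {n : ℕ} {K : Set (Fin (n + 1) → ℂ)}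

lemma cons_mem (hK : IsCompleteReinhardt K) {z z' : ℂ} {w w' : Fin n → ℂ} (hz : ‖z‖ ≤ ‖z'‖)
    (hw : ∀ k, ‖w k‖ ≤ ‖w' k‖) (h : Fin.cons z' w' ∈ K) : Fin.cons z w ∈ K :=
  hK _ h _ fun k => Fin.cases (by simpa using hz) (fun j => by simpa using hw j) k

lemma slice (hK : IsCompleteReinhardt K) (z : ℂ) : IsCompleteReinhardt (slice K z) :=
  fun _ hw _ hw' => hK.cons_mem le_rfl hw' hw

lemma slice_anti (hK : IsCompleteReinhardt K) {z z' : ℂ} (h : ‖z‖ ≤ ‖z'‖) :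
    _root_.slice K z' ⊆ _root_.slice K z :=
  fun _ hw => hK.cons_mem h (fun _ => le_rfl) hw

lemma slice_congr_norm (hK : IsCompleteReinhardt K) {z z' : ℂ} (h : ‖z‖ = ‖z'‖) :
    _root_.slice K z = _root_.slice K z' :=
  (hK.slice_anti h.ge).antisymm (hK.slice_anti h.le)

end IsCompleteReinhardt

theorem nuC_smul_compl_le {n : ℕ} {K : Set (Fin n → ℂ)} (hK : IsCompleteReinhardt K)
    (hKm : MeasurableSet K) {t : ℝ} (ht : 1 ≤ t) : nuC n (t • Kᶜ) ≤ nuC n Kᶜ ^ (t ^ 2) := by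
  have ht0 : t ≠ 0 := by positivity
  induction n with
  | zero =>
    rcases Kᶜ.eq_empty_or_nonempty with h | ⟨x, hx⟩
    · simp [h]
    · have h : Kᶜ = univ := eq_univ_of_forall fun y => Subsingleton.elim x y ▸ hx
      simp [h, smul_set_univ₀ ht0]
  | succ n ih =>
    set g : ℝ → ℝ≥0∞ := fun v => nuC n (slice K (√(2 * v) : ℂ))ᶜ
    have hg_norm : ∀ z : ℂ, nuC n (slice K z)ᶜ = g (‖z‖ ^ 2 / 2) := fun z => by
      rw [hK.slice_congr_norm (z' := (√(2 * (‖z‖ ^ 2 / 2)) : ℂ))]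
      rw [Complex.norm_real, Real.norm_of_nonneg (Real.sqrt_nonneg _),
        mul_div_cancel₀ _ two_ne_zero, Real.sqrt_sq (norm_nonneg z)]
    have hg_mono : Monotone g := fun a b hab => by
      refine measure_mono (compl_subset_compl.2 (hK.slice_anti ?_))
      simp only [Complex.norm_real, Real.norm_of_nonneg (Real.sqrt_nonneg _)]
      gcongr
    calc nuC (n + 1) (t • Kᶜ) = ∫⁻ z, nuC n (t • (slice K (t⁻¹ • z))ᶜ) ∂gaussianC := by
          simp_rw [nuC_succ_apply (hKm.compl.const_smul₀ t), slice_smul ht0]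
          rfl
      _ ≤ ∫⁻ z, nuC n (slice K (t⁻¹ • z))ᶜ ^ (t ^ 2) ∂gaussianC :=
          lintegral_mono fun z => ih (hK.slice _) (measurableSet_slice hKm _)
      _ = ∫⁻ z, g (‖z‖ ^ 2 / 2 / t ^ 2) ^ (t ^ 2) ∂gaussianC := by
          simp_rw [hg_norm, norm_smul, norm_inv, Real.norm_eq_abs, mul_pow, inv_pow, sq_abs]
          ring_nf
      _ = ∫⁻ u in Ioi 0, ENNReal.ofReal (exp (-u)) * g (u / t ^ 2) ^ (t ^ 2) :=
          lintegral_gaussianC_comp_sq_norm_div_two (h := fun v => g (v / t ^ 2) ^ (t ^ 2))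
            ((hg_mono.measurable.comp (measurable_id.div_const _)).pow_const _)
      _ ≤ (∫⁻ u in Ioi 0, ENNReal.ofReal (exp (-u)) * g u) ^ (t ^ 2) :=
          lintegral_exp_neg_mul_rpow_div_le hg_mono (fun _ => prob_le_one) (one_le_pow₀ ht)
      _ = nuC (n + 1) Kᶜ ^ (t ^ 2) := by
          rw [← lintegral_gaussianC_comp_sq_norm_div_two hg_mono.measurable,
            nuC_succ_apply hKm.compl]
          simp_rw [← hg_norm]
          rfl

lemma nuC_compl_cylC {n : ℕ} (hn : 0 < n) {R : ℝ} (hR : 0 ≤ R) :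
    nuC n (cylC hn R)ᶜ = ENNReal.ofReal (exp (-R ^ 2 / 2)) := by
  obtain ⟨m, rfl⟩ : ∃ m, n = m + 1 := ⟨n - 1, by omega⟩
  have hset : (cylC hn R)ᶜ = (fun z => z 0) ⁻¹' {z : ℂ | R < ‖z‖} := by
    ext z
    simp [cylC]
  rw [hset, ← Measure.map_apply (measurable_pi_apply 0) (measurableSet_lt measurable_const
    measurable_norm), map_eval_zero_nuC, gaussianC_lt_norm hR]

lemma smul_cylC {n : ℕ} (hn : 0 < n) {t : ℝ} (ht : 0 < t) (R : ℝ) :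
    t • cylC hn R = cylC hn (t * R) := by
  ext z
  simp [mem_smul_set_iff_inv_smul_mem₀ ht.ne', cylC, abs_of_pos ht, inv_mul_le_iff₀ ht]

theorem reinhardt_supportsSC
    (n : ℕ) (hn : 0 < n) (K : Set (Fin n → ℂ)) (hK_closed : IsClosed K)
    (hK_reinhardt : ∀ z ∈ K, ∀ w : Fin n → ℂ,
      (∀ k, ‖w k‖ ≤ ‖z k‖) → w ∈ K) :
    SupportsSC hn K := by
  intro R hR hKC t ht
  have ht0 : 0 < t := by linarith
  have hKm := hK_closed.measurableSet
  have hcyl : ∀ r, MeasurableSet (cylC hn r) := fun r =>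
    measurableSet_le (by fun_prop) measurable_const
  have hKc : nuC n Kᶜ = ENNReal.ofReal (exp (-R ^ 2 / 2)) := by
    rw [prob_compl_eq_one_sub hKm, hKC, ← prob_compl_eq_one_sub (hcyl R), nuC_compl_cylC hn hR]
  calc nuC n (t • cylC hn R) = 1 - nuC n (cylC hn (t * R))ᶜ := by
        rw [smul_cylC hn ht0, prob_compl_eq_one_sub (hcyl _),
          ENNReal.sub_sub_cancel ENNReal.one_ne_top prob_le_one]
    _ = 1 - nuC n Kᶜ ^ (t ^ 2) := by
        rw [nuC_compl_cylC hn (by positivity), hKc,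
          ENNReal.ofReal_rpow_of_nonneg (exp_nonneg _) (by positivity), ← Real.exp_mul,
          show -R ^ 2 / 2 * t ^ 2 = -(t * R) ^ 2 / 2 by ring]
    _ ≤ 1 - nuC n (t • Kᶜ) := tsub_le_tsub_left (nuC_smul_compl_le hK_reinhardt hKm ht) 1
    _ = nuC n (t • K) := by
        rw [smul_set_compl₀ ht0.ne', prob_compl_eq_one_sub (hKm.const_smul₀ t),
          ENNReal.sub_sub_cancel ENNReal.one_ne_top prob_le_one]
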